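/- Let X1, X2, X3 be mutually independent finite random variables and Y, Z two other finite random variables. Then I(X2; Y | X1, X3) − I(X2; Z) + I(X1, X2, X3; Y) − I(X1, X2, X3; Z) ≤ I(X2; Y | X1, X3) − I(X1, X2; Z) + I(X1, X2, X3; Y) − I(X2, X3; Z). -/

import Mathlib

/-!
In terms of entropies the inequality reads
`H(X1,X2) + H(X2,X3) + H(X2,Z) + H(X1,X2,X3,Z) ≤ H(X2) + H(X1,X2,X3) + H(X1,X2,Z) + H(X2,X3,Z)`.
Mutual independence gives `H(X1,X2,X3) + H(X2) = H(X1,X2) + H(X2,X3)`, and what is left is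
`I(X1; X3 | X2, Z) ≥ 0`. This is Gibbs' inequality: if `t, a, b, c` are the laws of `(X, Y, W)`,
`(X, W)`, `(Y, W)`, `W`, then `a b / c` has the same total mass as `t`, so `log x ≤ x - 1` bounds
`I(X; Y | W) = ∑ t log (t c / (a b))` below by `∑ (t - a b / c) = 0`.
-/

open Finset

noncomputable def rvDist {Ω : Type*} [Fintype Ω] {A : Type*} [Fintype A] [DecidableEq A]
    (p : Ω → ℝ) (X : Ω → A) (a : A) : ℝ :=
  ∑ ω, if X ω = a then p ω else 0

noncomputable def rvEnt {Ω : Type*} [Fintype Ω] {A : Type*} [Fintype A] [DecidableEq A]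
    (p : Ω → ℝ) (X : Ω → A) : ℝ :=
  ∑ a, Real.negMulLog (rvDist p X a)

/-- Mutual information `I(X; Y)`. -/
noncomputable def rvMI {Ω : Type*} [Fintype Ω] {A B : Type*} [Fintype A] [DecidableEq A]
    [Fintype B] [DecidableEq B] (p : Ω → ℝ) (X : Ω → A) (Y : Ω → B) : ℝ :=
  rvEnt p X + rvEnt p Y - rvEnt p (fun ω => (X ω, Y ω))

/-- Conditional mutual information `I(X; Y | Z)`. -/
noncomputable def rvCMI {Ω : Type*} [Fintype Ω] {A B C : Type*} [Fintype A] [DecidableEq A]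
    [Fintype B] [DecidableEq B] [Fintype C] [DecidableEq C]
    (p : Ω → ℝ) (X : Ω → A) (Y : Ω → B) (Z : Ω → C) : ℝ :=
  rvEnt p (fun ω => (X ω, Z ω)) + rvEnt p (fun ω => (Y ω, Z ω))
    - rvEnt p (fun ω => (X ω, Y ω, Z ω)) - rvEnt p Z

section
variable {Ω A B : Type*} [Fintype Ω] [Fintype A] [DecidableEq A] [Fintype B] [DecidableEq B]
  (p : Ω → ℝ)

theorem rvDist_nonneg (hp : ∀ ω, 0 ≤ p ω) (X : Ω → A) (a : A) : 0 ≤ rvDist p X a :=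
  sum_nonneg fun ω _ => ite_nonneg (hp ω) le_rfl

theorem sum_rvDist (X : Ω → A) : ∑ a, rvDist p X a = ∑ ω, p ω := by
  simp only [rvDist]
  rw [sum_comm]
  simp

theorem rvDist_comp (f : A → B) (X : Ω → A) (b : B) :
    rvDist p (fun ω => f (X ω)) b = ∑ a, if f a = b then rvDist p X a else 0 := by
  have h (a : A) : (if f a = b then rvDist p X a else 0)
      = ∑ ω, if X ω = a then (if f a = b then p ω else 0) else 0 := by
    split_ifs <;> simp [rvDist]
  rw [sum_congr rfl fun a _ => h a, sum_comm]
  simp [rvDist]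

theorem rvDist_comp_apply_of_injective {f : A → B} (hf : f.Injective) (X : Ω → A) (a : A) :
    rvDist p (fun ω => f (X ω)) (f a) = rvDist p X a := by
  simp [rvDist_comp p f X, hf.eq_iff]

theorem rvDist_le_rvDist_comp (hp : ∀ ω, 0 ≤ p ω) (f : A → B) (X : Ω → A) (a : A) :
    rvDist p X a ≤ rvDist p (fun ω => f (X ω)) (f a) := by
  rw [rvDist_comp p f X]
  calc rvDist p X a = if f a = f a then rvDist p X a else 0 := by simp
    _ ≤ _ := single_le_sum (f := fun a' => if f a' = f a then rvDist p X a' else 0)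
        (fun a' _ => ite_nonneg (rvDist_nonneg p hp X a') le_rfl) (mem_univ a)

theorem sum_rvDist_pair_left (X : Ω → A) (Y : Ω → B) (b : B) :
    ∑ a, rvDist p (fun ω => (X ω, Y ω)) (a, b) = rvDist p Y b := by
  simp only [rvDist]
  rw [sum_comm]
  simp [Prod.ext_iff, ite_and]

theorem rvEnt_comp_eq_sum (f : A → B) (X : Ω → A) :
    rvEnt p (fun ω => f (X ω))
      = -∑ a, rvDist p X a * Real.log (rvDist p (fun ω => f (X ω)) (f a)) := by
  simp only [rvEnt, Real.negMulLog, rvDist_comp p f X, sum_mul, neg_mul, sum_neg_distrib]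
  rw [sum_comm]
  simp [ite_mul]

theorem rvEnt_comp_of_injective {f : A → B} (hf : f.Injective) (X : Ω → A) :
    rvEnt p (fun ω => f (X ω)) = rvEnt p X := by
  rw [rvEnt_comp_eq_sum p f X]
  simp [rvDist_comp_apply_of_injective p hf, rvEnt, Real.negMulLog]

end

theorem sub_mul_div_le_mul_log {t a b c : ℝ} (ht : 0 ≤ t) (hta : t ≤ a) (htb : t ≤ b)
    (hac : a ≤ c) :
    t - a * b / c ≤ t * (Real.log t + Real.log c - Real.log a - Real.log b) := by
  rcases ht.eq_or_lt with rfl | ht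
  · simpa using div_nonneg (mul_nonneg hta htb) (hta.trans hac)
  have ha := ht.trans_le hta
  have hb := ht.trans_le htb
  have hc := ha.trans_le hac
  have hlog : Real.log (a * b / (t * c)) = Real.log a + Real.log b - Real.log t - Real.log c := by
    rw [Real.log_div (by positivity) (by positivity), Real.log_mul ha.ne' hb.ne',
      Real.log_mul ht.ne' hc.ne']
    ring
  have key := mul_le_mul_of_nonneg_left
    (Real.log_le_sub_one_of_pos (show 0 < a * b / (t * c) by positivity)) ht.le
  have hmul : t * (a * b / (t * c) - 1) = a * b / c - t := by field_simp
  rw [hlog, hmul] at key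
  linarith

theorem sum_mul_div_eq_sum_of_marginals {ι κ μ : Type*} [Fintype ι] [Fintype κ] [Fintype μ]
    (a : ι × μ → ℝ) (b : κ × μ → ℝ) (c : μ → ℝ) (ha : ∀ w, ∑ u, a (u, w) = c w)
    (hb : ∀ w, ∑ v, b (v, w) = c w) :
    ∑ x : ι × κ × μ, a (x.1, x.2.2) * b (x.2.1, x.2.2) / c x.2.2 = ∑ w, c w := by
  calc _ = ∑ w, (∑ u, a (u, w)) * (∑ v, b (v, w)) / c w := by
        simp only [Fintype.sum_prod_type_right, sum_mul_sum, sum_div]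
        exact sum_congr rfl fun w _ => sum_comm
    _ = ∑ w, c w := by simp only [ha, hb, mul_self_div_self]

theorem rvCMI_nonneg {Ω A B C : Type*} [Fintype Ω] [Fintype A] [DecidableEq A]
    [Fintype B] [DecidableEq B] [Fintype C] [DecidableEq C] (p : Ω → ℝ) (hp : ∀ ω, 0 ≤ p ω)
    (X : Ω → A) (Y : Ω → B) (W : Ω → C) : 0 ≤ rvCMI p X Y W := by
  unfold rvCMI
  have hXW := rvEnt_comp_eq_sum p (fun x : A × B × C => (x.1, x.2.2)) (fun ω => (X ω, Y ω, W ω))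
  have hYW := rvEnt_comp_eq_sum p (fun x : A × B × C => (x.2.1, x.2.2)) (fun ω => (X ω, Y ω, W ω))
  have hW : rvEnt p W = _ :=
    rvEnt_comp_eq_sum p (fun x : A × B × C => x.2.2) (fun ω => (X ω, Y ω, W ω))
  dsimp only at hXW hYW hW
  set T : Ω → A × B × C := fun ω => (X ω, Y ω, W ω)
  set t := rvDist p T
  set a := rvDist p (fun ω => (X ω, W ω))
  set b := rvDist p (fun ω => (Y ω, W ω))
  set c := rvDist p W
  have hT : rvEnt p T = -∑ x, t x * Real.log (t x) := by
    simp [rvEnt, Real.negMulLog, t]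
  have gibbs (x : A × B × C) : t x - a (x.1, x.2.2) * b (x.2.1, x.2.2) / c x.2.2
      ≤ t x * (Real.log (t x) + Real.log (c x.2.2) - Real.log (a (x.1, x.2.2))
        - Real.log (b (x.2.1, x.2.2))) :=
    sub_mul_div_le_mul_log (rvDist_nonneg p hp T x)
      (rvDist_le_rvDist_comp p hp (fun x => (x.1, x.2.2)) T x)
      (rvDist_le_rvDist_comp p hp (fun x => (x.2.1, x.2.2)) T x)
      (rvDist_le_rvDist_comp p hp Prod.snd (fun ω => (X ω, W ω)) (x.1, x.2.2))
  have mass : ∑ x : A × B × C, a (x.1, x.2.2) * b (x.2.1, x.2.2) / c x.2.2 = ∑ x, t x := by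
    rw [sum_mul_div_eq_sum_of_marginals a b c (sum_rvDist_pair_left p X W)
      (sum_rvDist_pair_left p Y W), sum_rvDist, sum_rvDist]
  calc 0 = ∑ x, (t x - a (x.1, x.2.2) * b (x.2.1, x.2.2) / c x.2.2) := by
        rw [sum_sub_distrib, mass, sub_self]
    _ ≤ _ := sum_le_sum fun x _ => gibbs x
    _ = _ := by
        simp only [hXW, hYW, hW, hT, mul_add, mul_sub, sum_add_distrib, sum_sub_distrib]
        ring

section
variable {Ω A B C : Type*} [Fintype Ω] [Fintype A] [DecidableEq A] [Fintype B] [DecidableEq B]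
  [Fintype C] [DecidableEq C] (p : Ω → ℝ)

def RvIndep (X : Ω → A) (Y : Ω → B) : Prop :=
  ∀ a b, rvDist p (fun ω => (X ω, Y ω)) (a, b) = rvDist p X a * rvDist p Y b

variable {p}

theorem RvIndep.comp_right {X : Ω → A} {Y : Ω → B} (h : RvIndep p X Y) (g : B → C) :
    RvIndep p X (fun ω => g (Y ω)) := by
  intro a c
  change rvDist p (fun ω => Prod.map id g (X ω, Y ω)) (a, c) = _
  unfold RvIndep at h
  rw [rvDist_comp p (Prod.map id g) (fun ω => (X ω, Y ω)), rvDist_comp p g Y, mul_sum]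
  simp [Fintype.sum_prod_type, Prod.ext_iff, ite_and, h]

theorem RvIndep.rvEnt_pair (hsum : ∑ ω, p ω = 1) {X : Ω → A} {Y : Ω → B} (h : RvIndep p X Y) :
    rvEnt p (fun ω => (X ω, Y ω)) = rvEnt p X + rvEnt p Y := by
  unfold RvIndep at h
  simp only [rvEnt, Fintype.sum_prod_type, h, Real.negMulLog_mul, sum_add_distrib, ← sum_mul,
    ← mul_sum, sum_rvDist, hsum]
  ring

end

theorem rvEnt_triple_add_middle_eq_of_indep {Ω A B C : Type*} [Fintype Ω] [Fintype A]
    [DecidableEq A] [Fintype B] [DecidableEq B] [Fintype C] [DecidableEq C] {p : Ω → ℝ}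
    (hsum : ∑ ω, p ω = 1) {X1 : Ω → A} {X2 : Ω → B} {X3 : Ω → C}
    (h : ∀ a1 a2 a3, rvDist p (fun ω => (X1 ω, X2 ω, X3 ω)) (a1, a2, a3)
      = rvDist p X1 a1 * rvDist p X2 a2 * rvDist p X3 a3) :
    rvEnt p (fun ω => (X1 ω, X2 ω, X3 ω)) + rvEnt p X2
      = rvEnt p (fun ω => (X1 ω, X2 ω)) + rvEnt p (fun ω => (X2 ω, X3 ω)) := by
  have h23 : RvIndep p X2 X3 := fun a2 a3 => by
    rw [← sum_rvDist_pair_left p X1 (fun ω => (X2 ω, X3 ω))]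
    simp only [h, mul_assoc, ← sum_mul, sum_rvDist, hsum, one_mul]
  have h1_23 : RvIndep p X1 (fun ω => (X2 ω, X3 ω)) := by
    rintro a1 ⟨a2, a3⟩
    rw [h23, h, mul_assoc]
  have h12 : RvIndep p X1 X2 := h1_23.comp_right Prod.fst
  rw [h1_23.rvEnt_pair hsum, h12.rvEnt_pair hsum]
  ring

theorem stmt18 {Ω A1 A2 A3 B C : Type*} [Fintype Ω]
    [Fintype A1] [DecidableEq A1] [Fintype A2] [DecidableEq A2]
    [Fintype A3] [DecidableEq A3] [Fintype B] [DecidableEq B] [Fintype C] [DecidableEq C]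
    (p : Ω → ℝ) (hp : ∀ ω, 0 ≤ p ω) (hsum : ∑ ω, p ω = 1)
    (X1 : Ω → A1) (X2 : Ω → A2) (X3 : Ω → A3) (Y : Ω → B) (Z : Ω → C)
    (hindep : ∀ a1 a2 a3, rvDist p (fun ω => (X1 ω, X2 ω, X3 ω)) (a1, a2, a3)
      = rvDist p X1 a1 * rvDist p X2 a2 * rvDist p X3 a3) :
    rvCMI p X2 Y (fun ω => (X1 ω, X3 ω)) - rvMI p X2 Z
        + rvMI p (fun ω => (X1 ω, X2 ω, X3 ω)) Y - rvMI p (fun ω => (X1 ω, X2 ω, X3 ω)) Z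
      ≤ rvCMI p X2 Y (fun ω => (X1 ω, X3 ω)) - rvMI p (fun ω => (X1 ω, X2 ω)) Z
        + rvMI p (fun ω => (X1 ω, X2 ω, X3 ω)) Y - rvMI p (fun ω => (X2 ω, X3 ω)) Z := by
  have hcmi := rvCMI_nonneg p hp X1 X3 (fun ω => (X2 ω, Z ω))
  have hind := rvEnt_triple_add_middle_eq_of_indep hsum hindep
  have e12 : rvEnt p (fun ω => ((X1 ω, X2 ω), Z ω)) = rvEnt p (fun ω => (X1 ω, X2 ω, Z ω)) :=
    rvEnt_comp_of_injective p (Equiv.prodAssoc A1 A2 C).symm.injective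
      (fun ω => (X1 ω, X2 ω, Z ω))
  have e23 : rvEnt p (fun ω => ((X2 ω, X3 ω), Z ω)) = rvEnt p (fun ω => (X3 ω, X2 ω, Z ω)) :=
    rvEnt_comp_of_injective p (f := fun x : A3 × A2 × C => ((x.2.1, x.1), x.2.2))
      (fun x y h => by simp_all [Prod.ext_iff]) (fun ω => (X3 ω, X2 ω, Z ω))
  have e123 : rvEnt p (fun ω => ((X1 ω, X2 ω, X3 ω), Z ω))
      = rvEnt p (fun ω => (X1 ω, X3 ω, X2 ω, Z ω)) :=
    rvEnt_comp_of_injective p (f := fun x : A1 × A3 × A2 × C => ((x.1, x.2.2.1, x.2.1), x.2.2.2))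
      (fun x y h => by simp_all [Prod.ext_iff]) (fun ω => (X1 ω, X3 ω, X2 ω, Z ω))
  simp only [rvMI, rvCMI] at hcmi ⊢
  linarith
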